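/- For every binary path P of length n starting with a downstep and every positive integer k, there is a bijection between multichains P = P_0 ≤ P_1 ≤ ⋯ ≤ P_k = 1_n in the lattice of binary paths and shifted tableaux T of shape λ(P) with max(T) ≤ k, where the tableau entry at cell (i,j) is t_{ij} = k − ξ for the unique ξ with h_{n+i−j}(P_ξ) ≤ n − i − j < h_{n+i−j}(P_{ξ+1}). -/

import Mathlib

open Finset

/-- The `x`-th step (1-indexed) of a binary path `P` of length `n`;
`true` denotes an upstep `u`, `false` a downstep `d`. -/
def stp (n : ℕ) (P : Fin n → Bool) (x : ℕ) : Bool :=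
  if h : 1 ≤ x ∧ x ≤ n then P ⟨x - 1, by omega⟩ else true

/-- The height of the `x`-th lattice point of the path (the partial sum of `±1`'s). -/
def ht (n : ℕ) (P : Fin n → Bool) (x : ℕ) : ℤ :=
  ∑ j ∈ Finset.Icc 1 x, (if stp n P j then (1 : ℤ) else -1)

/-- The order on binary paths: `P ≤ Q` iff every height of `P` is at most that of `Q`. -/
def pLE (n : ℕ) (P Q : Fin n → Bool) : Prop := ∀ x ≤ n, ht n P x ≤ ht n Q x

def pLT (n : ℕ) (P Q : Fin n → Bool) : Prop := pLE n P Q ∧ ¬ pLE n Q P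

/-- `Q` covers `P` in the lattice of binary paths. -/
def covers (n : ℕ) (P Q : Fin n → Bool) : Prop :=
  pLT n P Q ∧ ∀ R, pLT n P R → ¬ pLT n R Q

/-- The `x`-th point of `P` is a valley: last point of a maximal run of downsteps. -/
def valley (n : ℕ) (P : Fin n → Bool) (x : ℕ) : Prop :=
  1 ≤ x ∧ x ≤ n ∧ stp n P x = false ∧ (x = n ∨ stp n P (x + 1) = true)

/-- The maximum path `1_n = u^n`. -/
def pTop (n : ℕ) : Fin n → Bool := fun _ => true

/-- The minimum path `0_n = d^n`. -/
def pBot (n : ℕ) : Fin n → Bool := fun _ => false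

/-- The set of positions of downsteps of `P`. -/
def dsteps (n : ℕ) (P : Fin n → Bool) : Finset (Fin n) :=
  Finset.univ.filter fun j => P j = false

/-- `m(P) = |P|_d`, the number of downsteps of `P`. -/
def nd (n : ℕ) (P : Fin n → Bool) : ℕ := (dsteps n P).card

/-- The 0-indexed position of the `(i+1)`-st downstep of `P`. -/
def dpos (n : ℕ) (P : Fin n → Bool) (i : Fin (nd n P)) : ℕ :=
  (((dsteps n P).orderIsoOfFin rfl i : {x // x ∈ dsteps n P}) : Fin n)

/-- The part `λ_{i+1} = n − (i+1) − k_{i+1} + 1` of the strict partition `λ(P)`;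
since `k_{i+1} = dpos i − i`, this equals `n − dpos i`. -/
def lam (n : ℕ) (P : Fin n → Bool) (i : Fin (nd n P)) : ℕ := n - dpos n P i

/-- The shifted diagram `F(P)` of shape `λ(P)`, as the set of (1-indexed) cells
`(i, j)` with `i ∈ [m]`, `i ≤ j ≤ λ_i + i − 1`. -/
def F (n : ℕ) (P : Fin n → Bool) : Set (ℕ × ℕ) :=
  {c | ∃ i : Fin (nd n P),
    c.1 = (i : ℕ) + 1 ∧ (i : ℕ) + 1 ≤ c.2 ∧ c.2 ≤ lam n P i + (i : ℕ)}

/-- The `x`-coordinate `n + i − j` of the lattice point of cell `c = (i,j)`. -/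
def cellX (n : ℕ) (c : ℕ × ℕ) : ℕ := n + c.1 - c.2

/-- The `y`-coordinate `n − i − j` of the lattice point of cell `c = (i,j)`. -/
def cellY (n : ℕ) (c : ℕ × ℕ) : ℤ := (n : ℤ) - c.1 - c.2

/-- A shifted tableau of shape `λ(P)`: positive entries, weakly increasing along
rows and columns. -/
def isTab (n : ℕ) (P : Fin n → Bool) (T : {c : ℕ × ℕ // c ∈ F n P} → ℕ) : Prop :=
  (∀ c, 0 < T c) ∧
  (∀ c c' : {c : ℕ × ℕ // c ∈ F n P},
    c.1.1 = c'.1.1 → c.1.2 + 1 = c'.1.2 → T c ≤ T c') ∧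
  (∀ c c' : {c : ℕ × ℕ // c ∈ F n P},
    c.1.1 + 1 = c'.1.1 → c.1.2 = c'.1.2 → T c ≤ T c')

/-- A shifted tableau is strictly increasing along rows and columns. -/
def isStrictTab (n : ℕ) (P : Fin n → Bool)
    (T : {c : ℕ × ℕ // c ∈ F n P} → ℕ) : Prop :=
  (∀ c c' : {c : ℕ × ℕ // c ∈ F n P},
    c.1.1 = c'.1.1 → c.1.2 + 1 = c'.1.2 → T c < T c') ∧
  (∀ c c' : {c : ℕ × ℕ // c ∈ F n P},
    c.1.1 + 1 = c'.1.1 → c.1.2 = c'.1.2 → T c < T c')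

/-- A multichain `P = P_0 ≤ P_1 ≤ ⋯ ≤ P_k = u^n`. -/
def isMultichain (n k : ℕ) (P : Fin n → Bool)
    (C : Fin (k + 1) → Fin n → Bool) : Prop :=
  (∀ i : Fin k, pLE n (C i.castSucc) (C i.succ)) ∧ C 0 = P ∧ C (Fin.last k) = pTop n

/-- The defining relation of the bijection: the entry at cell `(i,j)` is `k − ξ`
for the unique `ξ` with `h_{n+i−j}(P_ξ) ≤ n − i − j < h_{n+i−j}(P_{ξ+1})`. -/
def corr (n k : ℕ) (P : Fin n → Bool) (C : Fin (k + 1) → Fin n → Bool)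
    (T : {c : ℕ × ℕ // c ∈ F n P} → ℕ) : Prop :=
  ∀ (c : {c : ℕ × ℕ // c ∈ F n P}) (ξ : ℕ) (hξ : ξ < k),
    (T c = k - ξ ↔
      (ht n (C ⟨ξ, by omega⟩) (cellX n c.1) ≤ cellY n c.1 ∧
       cellY n c.1 < ht n (C ⟨ξ + 1, by omega⟩) (cellX n c.1)))

/-!
Send the cell `(i, j)` of `F(P)` to the lattice point `(n + i - j, n - i - j)`. The cells become
the points `(x, y)` with `y ≡ x (mod 2)` and `h_x(P) ≤ y < x`, i.e. the points between `P` and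
`1_n`, and along each vertical line the tableau entries increase downwards. The tableau of a
multichain puts at each point the number of paths among `P_1, …, P_k` passing strictly above it.
Conversely, `P_ξ` passes weakly below exactly the points with entry `≤ k - ξ`; on the line of
abscissa `x` these form an initial segment from the top whose length is the number of downsteps
of `P_ξ` up to `x`. The row and column inequalities of the tableau are exactly what makes this
number grow by `0` or `1` from `x` to `x + 1`.
-/

section Threshold

variable {α : Type*} [LinearOrder α] {s : Finset α}

theorem AntitoneOn.iff_card_filter_le {q : α → Prop} [DecidablePred q]
    (hq : AntitoneOn q s) {a : α} (ha : a ∈ s) :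
    q a ↔ #{b ∈ s | b ≤ a} ≤ #{b ∈ s | q b} := by
  refine ⟨fun hqa => card_le_card fun b hb => ?_, fun hcard => by_contra fun hqa => ?_⟩
  · rw [mem_filter] at hb ⊢
    exact ⟨hb.1, hq hb.1 ha hb.2 hqa⟩
  · have hsub : {b ∈ s | q b} ⊆ {b ∈ s | b ≤ a} := fun b hb => by
      rw [mem_filter] at hb ⊢
      exact ⟨hb.1, le_of_not_gt fun hab => hqa (hq ha hb.1 hab.le hb.2)⟩
    have hssub : {b ∈ s | q b} ⊂ {b ∈ s | b ≤ a} :=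
      (ssubset_iff_of_subset hsub).2 ⟨a, by simp [ha], by simp [hqa]⟩
    exact (card_lt_card hssub).not_ge hcard

theorem MonotoneOn.iff_card_filter_le {p : α → Prop} [DecidablePred p]
    (hp : MonotoneOn p s) {a : α} (ha : a ∈ s) :
    p a ↔ #{b ∈ s | a ≤ b} ≤ #{b ∈ s | p b} := by
  refine ⟨fun hpa => card_le_card fun b hb => ?_, fun hcard => by_contra fun hpa => ?_⟩
  · rw [mem_filter] at hb ⊢
    exact ⟨hb.1, hp ha hb.1 hb.2 hpa⟩
  · have hsub : {b ∈ s | p b} ⊆ {b ∈ s | a ≤ b} := fun b hb => by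
      rw [mem_filter] at hb ⊢
      exact ⟨hb.1, le_of_not_gt fun hba => hpa (hp hb.1 ha hba.le hb.2)⟩
    have hssub : {b ∈ s | p b} ⊂ {b ∈ s | a ≤ b} :=
      (ssubset_iff_of_subset hsub).2 ⟨a, by simp [ha], by simp [hpa]⟩
    exact (card_lt_card hssub).not_ge hcard

theorem Finset.apply_orderEmbOfFin_iff_lt_card_filter {k : ℕ} (h : #s = k) {p : α → Prop}
    [DecidablePred p] (hp : Antitone p) (i : Fin k) :
    p (s.orderEmbOfFin h i) ↔ (i : ℕ) < #{a ∈ s | p a} := by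
  have hcard : #{a ∈ s | p a} = #{j | p (s.orderEmbOfFin h j)} := by
    conv_lhs => rw [← map_orderEmbOfFin_univ s h, filter_map, card_map]
    rfl
  have hlower := ((hp.comp_monotone (s.orderEmbOfFin h).monotone).antitoneOn
    (univ : Finset (Fin k))).iff_card_filter_le (mem_univ i)
  rw [filter_ge_eq_Iic, Fin.card_Iic] at hlower
  rw [hcard]
  exact hlower.trans Nat.succ_le_iff

end Threshold

theorem Nat.eq_of_forall_le_iff_of_le {a b D : ℕ} (ha : a ≤ D) (hb : b ≤ D)
    (h : ∀ r, 1 ≤ r → r ≤ D → (r ≤ a ↔ r ≤ b)) : a = b := by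
  by_contra hne
  rcases Nat.lt_or_gt_of_ne hne with hlt | hlt
  · exact absurd ((h b (by omega) hb).2 le_rfl) (by omega)
  · exact absurd ((h a (by omega) ha).1 le_rfl) (by omega)

section Paths

variable {n : ℕ}

theorem stp_succ (Q : Fin n → Bool) {x : ℕ} (hx : x < n) : stp n Q (x + 1) = Q ⟨x, hx⟩ := by
  rw [stp, dif_pos ⟨by omega, by omega⟩]
  rfl

theorem ht_succ (Q : Fin n → Bool) (x : ℕ) :
    ht n Q (x + 1) = ht n Q x + if stp n Q (x + 1) then 1 else -1 :=
  sum_Icc_succ_top (by omega) _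

def downCount (n : ℕ) (Q : Fin n → Bool) (x : ℕ) : ℕ := #{j ∈ Icc 1 x | stp n Q j = false}

@[simp]
theorem downCount_zero (Q : Fin n → Bool) : downCount n Q 0 = 0 := rfl

theorem downCount_succ (Q : Fin n → Bool) (x : ℕ) :
    downCount n Q (x + 1) = downCount n Q x + if stp n Q (x + 1) = false then 1 else 0 := by
  rw [downCount, card_filter, sum_Icc_succ_top (by omega), ← card_filter, downCount]

theorem downCount_le_succ (Q : Fin n → Bool) (x : ℕ) :
    downCount n Q x ≤ downCount n Q (x + 1) := by
  rw [downCount_succ]; omega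

theorem downCount_succ_le (Q : Fin n → Bool) (x : ℕ) :
    downCount n Q (x + 1) ≤ downCount n Q x + 1 := by
  rw [downCount_succ]; split <;> omega

theorem downCount_le_self (Q : Fin n → Bool) (x : ℕ) : downCount n Q x ≤ x :=
  (card_filter_le _ _).trans (by simp)

theorem ht_eq_sub_downCount (Q : Fin n → Bool) (x : ℕ) :
    ht n Q x = x - 2 * downCount n Q x := by
  induction x with
  | zero => simp [ht]
  | succ x ih =>
    rw [ht_succ, downCount_succ, ih]
    cases stp n Q (x + 1) <;> simp only [Bool.false_eq_true, reduceIte] <;> push_cast <;> ring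

theorem pLE_iff_downCount_le {Q R : Fin n → Bool} :
    pLE n Q R ↔ ∀ x ≤ n, downCount n R x ≤ downCount n Q x := by
  simp only [pLE, ht_eq_sub_downCount]
  exact forall₂_congr fun _ _ => by omega

@[simp]
theorem downCount_pTop (x : ℕ) : downCount n (pTop n) x = 0 := by
  rw [downCount, card_eq_zero, filter_eq_empty_iff]
  intro j _
  unfold stp pTop
  split <;> simp

theorem eq_of_downCount_eq {Q R : Fin n → Bool}
    (h : ∀ x ≤ n, downCount n Q x = downCount n R x) : Q = R := by
  funext j
  have hj := h (j + 1) j.isLt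
  rw [downCount_succ, downCount_succ, h j j.isLt.le, stp_succ Q j.isLt,
    stp_succ R j.isLt] at hj
  cases hQ : Q j <;> cases hR : R j <;> simp_all

def ofDownCount (n : ℕ) (e : ℕ → ℕ) : Fin n → Bool := fun j => e (j + 1) = e j

theorem downCount_ofDownCount {e : ℕ → ℕ} (h0 : e 0 = 0)
    (hstep : ∀ x < n, e x ≤ e (x + 1) ∧ e (x + 1) ≤ e x + 1) :
    ∀ x ≤ n, downCount n (ofDownCount n e) x = e x := by
  intro x hx
  induction x with
  | zero => exact h0.symm
  | succ x ih =>
    rw [downCount_succ, ih (by omega), stp_succ _ (by omega)]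
    have := hstep x (by omega)
    by_cases he : e (x + 1) = e x
    · simp only [ofDownCount, he, decide_true, Bool.true_eq_false, ↓reduceIte, add_zero]
    · simp only [ofDownCount, he, decide_false, ↓reduceIte]
      omega

theorem isMultichain.monotone_ht {k : ℕ} {P : Fin n → Bool} {C : Fin (k + 1) → Fin n → Bool}
    (hC : isMultichain n k P C) {x : ℕ} (hx : x ≤ n) : Monotone fun ξ => ht n (C ξ) x :=
  Fin.monotone_iff_le_succ.2 fun i => hC.1 i x hx

end Paths

section Cells

variable {n : ℕ} {P : Fin n → Bool}

theorem card_filter_dsteps_lt {x : ℕ} (hx : x ≤ n) :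
    #{a ∈ dsteps n P | a.val < x} = downCount n P x := by
  unfold downCount
  apply card_nbij (fun a : Fin n => a.val + 1)
  · intro a ha
    rw [mem_coe, mem_filter, dsteps, mem_filter] at ha
    dsimp only
    rw [mem_coe, mem_filter, mem_Icc, stp_succ P a.isLt]
    exact ⟨⟨by omega, by omega⟩, ha.1.2⟩
  · intro a _ b _ hab
    exact Fin.ext (by simpa using hab)
  · intro j hj
    rw [mem_coe, mem_filter, mem_Icc] at hj
    obtain ⟨j, rfl⟩ : ∃ i, j = i + 1 := ⟨j - 1, by omega⟩
    refine ⟨⟨j, by omega⟩, ?_, rfl⟩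
    rw [mem_coe, mem_filter, dsteps, mem_filter]
    exact ⟨⟨mem_univ _, (stp_succ P _).symm.trans hj.2⟩, by simp only; omega⟩

theorem dpos_lt_iff {x : ℕ} (hx : x ≤ n) (i : Fin (nd n P)) :
    dpos n P i < x ↔ (i : ℕ) < downCount n P x := by
  rw [← card_filter_dsteps_lt hx]
  exact apply_orderEmbOfFin_iff_lt_card_filter rfl (p := fun a : Fin n => (a : ℕ) < x)
    (fun _ _ hab h => lt_of_le_of_lt hab h) i

theorem downCount_le_nd {x : ℕ} (hx : x ≤ n) : downCount n P x ≤ nd n P :=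
  card_filter_dsteps_lt hx ▸ card_filter_le _ _

def cellOf (n x r : ℕ) : ℕ × ℕ := (r, n + r - x)

theorem cellOf_mem_F_iff {x r : ℕ} :
    cellOf n x r ∈ F n P ↔ x ≤ n ∧ 1 ≤ r ∧ r ≤ downCount n P x := by
  constructor
  -- `j ≤ λ_i + i - 1` says that the `i`-th downstep of `P` comes before abscissa `n + i - j`.
  · rintro ⟨i, hi, hrj, hjl⟩
    simp only [cellOf, lam] at hi hrj hjl
    have hdn : dpos n P i < n := Fin.isLt _
    have hxn : x ≤ n := by omega
    have := (dpos_lt_iff hxn i).1 (by omega)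
    exact ⟨hxn, by omega, by omega⟩
  · rintro ⟨hxn, hr, hrD⟩
    have hi : r - 1 < nd n P := by have := downCount_le_nd (P := P) hxn; omega
    have hdx := (dpos_lt_iff hxn ⟨r - 1, hi⟩).2 (by simp only; omega)
    have hdn : dpos n P ⟨r - 1, hi⟩ < n := Fin.isLt _
    exact ⟨⟨r - 1, hi⟩, by simp only [cellOf]; omega, by simp only [cellOf]; omega,
      by simp only [cellOf, lam]; omega⟩

theorem cellOf_cellX {c : ℕ × ℕ} (hc : c ∈ F n P) : cellOf n (cellX n c) c.1 = c := by
  obtain ⟨i, hi, hrj, hjl⟩ := hc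
  have : lam n P i ≤ n := Nat.sub_le _ _
  refine Prod.ext rfl ?_
  simp only [cellOf, cellX]
  omega

theorem exists_eq_cellOf {c : ℕ × ℕ} (hc : c ∈ F n P) :
    ∃ x r, c = cellOf n x r ∧ x ≤ n ∧ 1 ≤ r ∧ r ≤ downCount n P x :=
  ⟨_, _, (cellOf_cellX hc).symm, cellOf_mem_F_iff.1 ((cellOf_cellX hc).symm ▸ hc)⟩

theorem cellX_cellOf {x r : ℕ} (hx : x ≤ n) : cellX n (cellOf n x r) = x := by
  simp only [cellX, cellOf]; omega

theorem cellY_cellOf {x r : ℕ} (hx : x ≤ n) : cellY n (cellOf n x r) = x - 2 * r := by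
  simp only [cellY, cellOf]; omega

end Cells

section Tableaux

variable {n : ℕ} {P : Fin n → Bool} {T : {c : ℕ × ℕ // c ∈ F n P} → ℕ}

open Classical in
noncomputable def entryAt (T : {c : ℕ × ℕ // c ∈ F n P} → ℕ) (x r : ℕ) : ℕ :=
  if h : cellOf n x r ∈ F n P then T ⟨_, h⟩ else 0

theorem entryAt_of_mem {x r : ℕ} (h : cellOf n x r ∈ F n P) : entryAt T x r = T ⟨_, h⟩ :=
  dif_pos h

theorem isTab.entryAt_succ_le (hT : isTab n P T) {x r : ℕ} (hx : x < n) (hr : 1 ≤ r)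
    (hrD : r ≤ downCount n P x) : entryAt T (x + 1) r ≤ entryAt T x r := by
  have h₁ := cellOf_mem_F_iff (P := P).2 ⟨hx.le, hr, hrD⟩
  have h₂ := cellOf_mem_F_iff (P := P).2 ⟨hx, hr, hrD.trans (downCount_le_succ P x)⟩
  rw [entryAt_of_mem h₁, entryAt_of_mem h₂]
  exact hT.2.1 _ _ rfl (by simp only [cellOf]; omega)

theorem isTab.entryAt_le_succ_succ (hT : isTab n P T) {x r : ℕ} (hx : x < n) (hr : 1 ≤ r)
    (hrD : r + 1 ≤ downCount n P (x + 1)) : entryAt T x r ≤ entryAt T (x + 1) (r + 1) := by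
  have h₁ := cellOf_mem_F_iff (P := P).2 ⟨hx.le, hr, by have := downCount_succ_le P x; omega⟩
  have h₂ := cellOf_mem_F_iff (P := P).2 ⟨hx, by omega, hrD⟩
  rw [entryAt_of_mem h₁, entryAt_of_mem h₂]
  exact hT.2.2 _ _ rfl (by simp only [cellOf]; omega)

theorem isTab.monotoneOn_entryAt (hT : isTab n P T) {x : ℕ} (hx : x ≤ n) :
    MonotoneOn (entryAt T x) (Set.Icc 1 (downCount n P x)) := by
  refine monotoneOn_of_le_succ Set.ordConnected_Icc fun r _ hr hr' => ?_
  rw [Order.succ_eq_add_one] at hr' ⊢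
  have hrD := hr'.2
  obtain ⟨x, rfl⟩ : ∃ y, x = y + 1 := ⟨x - 1, by have := downCount_le_self P x; omega⟩
  calc entryAt T (x + 1) r
      ≤ entryAt T x r := hT.entryAt_succ_le hx hr.1 (by have := downCount_succ_le P x; omega)
    _ ≤ entryAt T (x + 1) (r + 1) := hT.entryAt_le_succ_succ hx hr.1 hrD

noncomputable def columnCountLE (T : {c : ℕ × ℕ // c ∈ F n P} → ℕ) (m x : ℕ) : ℕ :=
  #{r ∈ Icc 1 (downCount n P x) | entryAt T x r ≤ m}

theorem columnCountLE_le_downCount (m x : ℕ) : columnCountLE T m x ≤ downCount n P x :=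
  (card_filter_le _ _).trans (by simp)

theorem columnCountLE_mono {m m' : ℕ} (h : m ≤ m') (x : ℕ) :
    columnCountLE T m x ≤ columnCountLE T m' x :=
  card_le_card (monotone_filter_right _ fun _ _ hr => hr.trans h)

theorem isTab.le_columnCountLE_iff (hT : isTab n P T) {m x r : ℕ} (hx : x ≤ n) (hr : 1 ≤ r)
    (hrD : r ≤ downCount n P x) : r ≤ columnCountLE T m x ↔ entryAt T x r ≤ m := by
  have hq : AntitoneOn (fun r => entryAt T x r ≤ m) (Icc 1 (downCount n P x) : Finset ℕ) :=
    fun a ha b hb hab hb' => (hT.monotoneOn_entryAt hx (by simpa using ha) (by simpa using hb)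
      hab).trans hb'
  have hlow : #{b ∈ Icc 1 (downCount n P x) | b ≤ r} = r := by
    rw [show {b ∈ Icc 1 (downCount n P x) | b ≤ r} = Icc 1 r by ext; simp; omega]
    simp
  rw [hq.iff_card_filter_le (by simp [hr, hrD]), hlow]
  rfl

theorem isTab.columnCountLE_succ (hT : isTab n P T) (m : ℕ) {x : ℕ} (hx : x < n) :
    columnCountLE T m x ≤ columnCountLE T m (x + 1) ∧
      columnCountLE T m (x + 1) ≤ columnCountLE T m x + 1 := by
  have hD := columnCountLE_le_downCount (T := T) m x
  have hD' := columnCountLE_le_downCount (T := T) m (x + 1)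
  have := downCount_le_succ P x
  have := downCount_succ_le P x
  constructor
  · set e := columnCountLE T m x
    rcases Nat.eq_zero_or_pos e with he | he
    · omega
    · exact (hT.le_columnCountLE_iff (x := x + 1) hx he (by omega)).2
        ((hT.entryAt_succ_le hx he hD).trans ((hT.le_columnCountLE_iff hx.le he hD).1 le_rfl))
  · set e := columnCountLE T m (x + 1)
    rcases Nat.lt_or_ge e 2 with he | he
    · omega
    · have := (hT.le_columnCountLE_iff (r := e - 1) hx.le (by omega) (by omega)).2
        ((hT.entryAt_le_succ_succ hx (by omega) (by omega)).trans
          ((hT.le_columnCountLE_iff (m := m) (x := x + 1) (r := e - 1 + 1) hx (by omega)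
            (by omega)).1 (by omega)))
      omega

theorem columnCountLE_of_forall_le {m : ℕ} (hTm : ∀ c, T c ≤ m) (x : ℕ) :
    columnCountLE T m x = downCount n P x := by
  rw [columnCountLE, filter_true_of_mem fun r _ => ?_]
  · simp
  · unfold entryAt
    split
    · exact hTm _
    · exact Nat.zero_le _

theorem isTab.columnCountLE_zero (hT : isTab n P T) {x : ℕ} (hx : x ≤ n) :
    columnCountLE T 0 x = 0 := by
  rw [columnCountLE, card_eq_zero, filter_eq_empty_iff]
  intro r hr
  rw [mem_Icc] at hr
  rw [entryAt_of_mem (cellOf_mem_F_iff.2 ⟨hx, hr.1, hr.2⟩)]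
  exact not_le.2 (hT.1 _)

noncomputable def tabToChain (k : ℕ) (T : {c : ℕ × ℕ // c ∈ F n P} → ℕ) :
    Fin (k + 1) → Fin n → Bool :=
  fun ξ => ofDownCount n (columnCountLE T (k - ξ))

theorem isTab.downCount_tabToChain (hT : isTab n P T) (k : ℕ) (ξ : Fin (k + 1)) {x : ℕ}
    (hx : x ≤ n) : downCount n (tabToChain k T ξ) x = columnCountLE T (k - ξ) x :=
  downCount_ofDownCount (e := columnCountLE T (k - ξ)) (by simp [columnCountLE])
    (fun _ hx => hT.columnCountLE_succ _ hx) x hx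

theorem isTab.isMultichain_tabToChain (hT : isTab n P T) {k : ℕ} (hTk : ∀ c, T c ≤ k) :
    isMultichain n k P (tabToChain k T) := by
  refine ⟨fun i => pLE_iff_downCount_le.2 fun x hx => ?_, eq_of_downCount_eq fun x hx => ?_,
    eq_of_downCount_eq fun x hx => ?_⟩
  · rw [hT.downCount_tabToChain _ _ hx, hT.downCount_tabToChain _ _ hx]
    exact columnCountLE_mono (by rw [Fin.val_succ, Fin.val_castSucc]; omega) x
  · rw [hT.downCount_tabToChain _ _ hx, Fin.val_zero, Nat.sub_zero]
    exact columnCountLE_of_forall_le hTk x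
  · rw [hT.downCount_tabToChain _ _ hx, Fin.val_last, Nat.sub_self, downCount_pTop]
    exact hT.columnCountLE_zero hx

end Tableaux

section Chains

variable {n k : ℕ} {P : Fin n → Bool} {C : Fin (k + 1) → Fin n → Bool}

def chainToTab (P : Fin n → Bool) (k : ℕ) (C : Fin (k + 1) → Fin n → Bool)
    (c : {c : ℕ × ℕ // c ∈ F n P}) : ℕ :=
  #{ξ | cellY n c.1 < ht n (C ξ) (cellX n c.1)}

theorem isMultichain.le_chainToTab_iff (hC : isMultichain n k P C) {x r : ℕ}
    (hc : cellOf n x r ∈ F n P) (ξ : Fin (k + 1)) :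
    k + 1 - ξ ≤ chainToTab P k C ⟨_, hc⟩ ↔ (x : ℤ) - 2 * r < ht n (C ξ) x := by
  have hx := (cellOf_mem_F_iff.1 hc).1
  have hp : MonotoneOn (fun ξ => (x : ℤ) - 2 * r < ht n (C ξ) x)
      (univ : Finset (Fin (k + 1))) :=
    fun _ _ _ _ hab h => h.trans_le (hC.monotone_ht hx hab)
  rw [hp.iff_card_filter_le (mem_univ ξ), filter_le_eq_Ici, Fin.card_Ici, chainToTab,
    cellX_cellOf hx, cellY_cellOf hx]

theorem isMultichain.chainToTab_le (hC : isMultichain n k P C)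
    (c : {c : ℕ × ℕ // c ∈ F n P}) :
    chainToTab P k C c ≤ k := by
  obtain ⟨c, hc⟩ := c
  obtain ⟨x, r, rfl, hx, -, hrD⟩ := exists_eq_cellOf hc
  by_contra! hk
  have := (hC.le_chainToTab_iff hc 0).1 (by rw [Fin.val_zero]; omega)
  rw [hC.2.1, ht_eq_sub_downCount] at this
  omega

theorem isMultichain.isTab_chainToTab (hC : isMultichain n k P C) :
    isTab n P (chainToTab P k C) := by
  refine ⟨fun ⟨c, hc⟩ => ?_, fun ⟨c, hc⟩ ⟨c', hc'⟩ hr hj => ?_,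
    fun ⟨c, hc⟩ ⟨c', hc'⟩ hr hj => ?_⟩
  · obtain ⟨x, r, rfl, hx, hr, -⟩ := exists_eq_cellOf hc
    have := (hC.le_chainToTab_iff hc (Fin.last k)).2
    rw [hC.2.2, ht_eq_sub_downCount, downCount_pTop, Fin.val_last] at this
    have := this (by omega)
    omega
  all_goals
    obtain ⟨x, r, rfl, hx, -, -⟩ := exists_eq_cellOf hc
    obtain ⟨x', r', rfl, hx', -, -⟩ := exists_eq_cellOf hc'
    simp only [cellOf] at hr hj
    refine card_le_card (monotone_filter_right _ fun ξ _ h => ?_)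
    simp only [cellX_cellOf hx, cellY_cellOf hx, cellX_cellOf hx', cellY_cellOf hx'] at h ⊢
  · obtain rfl : x = x' + 1 := by omega
    rw [ht_succ] at h
    split at h <;> omega
  · obtain rfl : x' = x + 1 := by omega
    rw [ht_succ]
    split <;> omega

theorem isMultichain.corr_chainToTab (hC : isMultichain n k P C) :
    corr n k P C (chainToTab P k C) := by
  rintro ⟨c, hc⟩ ξ hξ
  obtain ⟨x, r, rfl, hx, -, -⟩ := exists_eq_cellOf hc
  have h₁ := hC.le_chainToTab_iff hc ⟨ξ, by omega⟩
  have h₂ := hC.le_chainToTab_iff hc ⟨ξ + 1, by omega⟩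
  simp only [cellX_cellOf hx, cellY_cellOf hx]
  simp only at h₁ h₂
  omega

theorem isMultichain.tabToChain_chainToTab (hC : isMultichain n k P C) :
    tabToChain k (chainToTab P k C) = C := by
  have hT := hC.isTab_chainToTab
  funext ξ
  refine eq_of_downCount_eq fun x hx => ?_
  rw [hT.downCount_tabToChain k ξ hx]
  have hPξ : ht n P x ≤ ht n (C ξ) x := hC.2.1 ▸ hC.monotone_ht hx (Fin.zero_le ξ)
  rw [ht_eq_sub_downCount, ht_eq_sub_downCount] at hPξ
  refine Nat.eq_of_forall_le_iff_of_le (columnCountLE_le_downCount _ _) (by omega)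
    fun r hr hrD => ?_
  have hc := cellOf_mem_F_iff.2 ⟨hx, hr, hrD⟩
  have := hC.le_chainToTab_iff hc ξ
  have := hC.chainToTab_le ⟨_, hc⟩
  rw [hT.le_columnCountLE_iff hx hr hrD, entryAt_of_mem hc]
  rw [ht_eq_sub_downCount] at *
  omega

theorem isTab.chainToTab_tabToChain {T : {c : ℕ × ℕ // c ∈ F n P} → ℕ} (hT : isTab n P T)
    (hTk : ∀ c, T c ≤ k) :
    chainToTab P k (tabToChain k T) = T := by
  have hC := hT.isMultichain_tabToChain hTk
  funext ⟨c, hc⟩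
  obtain ⟨x, r, rfl, hx, hr, hrD⟩ := exists_eq_cellOf hc
  refine Nat.eq_of_forall_le_iff_of_le (D := k + 1) (by have := hC.chainToTab_le ⟨_, hc⟩; omega)
    (by have := hTk ⟨_, hc⟩; omega) fun s hs hsk => ?_
  have h := hC.le_chainToTab_iff hc ⟨k + 1 - s, by omega⟩
  have := hT.le_columnCountLE_iff (m := s - 1) hx hr hrD
  rw [ht_eq_sub_downCount, hT.downCount_tabToChain _ _ hx] at h
  rw [entryAt_of_mem hc] at this
  simp only at h
  rw [show k - (k + 1 - s) = s - 1 by omega, show k + 1 - (k + 1 - s) = s by omega] at h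
  omega

end Chains

theorem stmt15_general (n k : ℕ) (P : Fin n → Bool) :
    ∃ e : {C : Fin (k + 1) → Fin n → Bool // isMultichain n k P C} ≃
          {T : {c : ℕ × ℕ // c ∈ F n P} → ℕ // isTab n P T ∧ ∀ c, T c ≤ k},
      ∀ C, corr n k P C.1 (e C).1 :=
  ⟨{ toFun := fun C => ⟨chainToTab P k C.1, C.2.isTab_chainToTab, C.2.chainToTab_le⟩
     invFun := fun T => ⟨tabToChain k T.1, T.2.1.isMultichain_tabToChain T.2.2⟩
     left_inv := fun C => Subtype.ext C.2.tabToChain_chainToTab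
     right_inv := fun T => Subtype.ext (T.2.1.chainToTab_tabToChain T.2.2) },
    fun C => C.2.corr_chainToTab⟩

/-- For `P` of length `n` starting with a downstep and `k ≥ 1`, there is a bijection
between `P–u^n` multichains of length `k` and shifted tableaux of shape `λ(P)` with
maximum entry at most `k`, given by `t_{ij} = k − ξ` as in `corr`. -/
theorem stmt15 (n k : ℕ) (P : Fin n → Bool) (hn : 0 < n)
    (hd : stp n P 1 = false) (hk : 0 < k) :
    ∃ e : {C : Fin (k + 1) → Fin n → Bool // isMultichain n k P C} ≃
          {T : {c : ℕ × ℕ // c ∈ F n P} → ℕ // isTab n P T ∧ ∀ c, T c ≤ k},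
      ∀ C, corr n k P C.1 (e C).1 :=
  stmt15_general n k P
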